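/- Let λ, μ : ℤ → ℂ be arbitrary functions. The birth-and-death coefficient matrix satisfies the isometry form identity: for all finitely supported u, v, w ∈ ℓ²(ℤ), 2 Re( ⟨u, F⁰₀ u⟩ + ⟨u, F⁰₁ v⟩ + ⟨u, F⁰₂ w⟩ + ⟨v, F¹₀ u⟩ + ⟨v, (W* − I)v⟩ + ⟨w, F²₀ u⟩ + ⟨w, (W − I)w⟩ ) + ‖F¹₀ u + (W* − I)v‖² + ‖F²₀ u + (W − I)w‖² = 0. -/

import Mathlib

/-- Birth-and-death coefficient `F⁰₀ = -½(|λ|²(N) + |μ|²(N))`. -/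
noncomputable def bdF00 (lam mu : ℤ → ℂ) (u : ℤ → ℂ) : ℤ → ℂ :=
  fun n => -(1 / 2 : ℂ) * ((‖lam n‖ : ℂ) ^ 2 + (‖mu n‖ : ℂ) ^ 2) * u n

/-- Birth-and-death coefficient `F⁰₁ = λ̄(N)W*`: `F⁰₁ e_n = conj(λ(n-1)) e_{n-1}`. -/
noncomputable def bdF01 (lam : ℤ → ℂ) (v : ℤ → ℂ) : ℤ → ℂ :=
  fun n => (starRingEnd ℂ) (lam n) * v (n + 1)

/-- Birth-and-death coefficient `F⁰₂ = μ̄(N)W`: `F⁰₂ e_n = conj(μ(n+1)) e_{n+1}`. -/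
noncomputable def bdF02 (mu : ℤ → ℂ) (w : ℤ → ℂ) : ℤ → ℂ :=
  fun n => (starRingEnd ℂ) (mu n) * w (n - 1)

/-- Birth-and-death coefficient `F¹₀ = -λ(N)`. -/
noncomputable def bdF10 (lam : ℤ → ℂ) (u : ℤ → ℂ) : ℤ → ℂ := fun n => -lam n * u n

/-- Birth-and-death coefficient `F²₀ = -μ(N)`. -/
noncomputable def bdF20 (mu : ℤ → ℂ) (u : ℤ → ℂ) : ℤ → ℂ := fun n => -mu n * u n

/-- The left shift `W*`: `(W* v)_n = v_{n+1}`. -/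
def bdWstar (v : ℤ → ℂ) : ℤ → ℂ := fun n => v (n + 1)

/-- The right shift `W`: `(W w)_n = w_{n-1}`. -/
def bdW (w : ℤ → ℂ) : ℤ → ℂ := fun n => w (n - 1)

/-- The `ℓ²(ℤ)` inner product of two (finitely supported) sequences. -/
noncomputable def l2ipZ (x y : ℤ → ℂ) : ℂ := ∑' n, (starRingEnd ℂ) (x n) * y n

private lemma key_pointwise (a b p q q' r r' : ℂ) :
    2 * ((starRingEnd ℂ) p * (-(1/2 : ℂ) * (((‖a‖ : ℂ))^2 + ((‖b‖ : ℂ))^2) * p)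
        + (starRingEnd ℂ) p * ((starRingEnd ℂ) a * q')
        + (starRingEnd ℂ) p * ((starRingEnd ℂ) b * r')
        + (starRingEnd ℂ) q * (-a * p)
        + (starRingEnd ℂ) q * (q' - q)
        + (starRingEnd ℂ) r * (-b * p)
        + (starRingEnd ℂ) r * (r' - r)).re
      + Complex.normSq (-a * p + (q' - q)) + Complex.normSq (-b * p + (r' - r))
    = (Complex.normSq q' - Complex.normSq q) + (Complex.normSq r' - Complex.normSq r) := by
  rw [show ((‖a‖ : ℂ))^2 = a * (starRingEnd ℂ) a by
        rw [← Complex.ofReal_pow, Complex.sq_norm, Complex.mul_conj],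
      show ((‖b‖ : ℂ))^2 = b * (starRingEnd ℂ) b by
        rw [← Complex.ofReal_pow, Complex.sq_norm, Complex.mul_conj]]
  simp only [Complex.normSq_apply, Complex.add_re, Complex.add_im, Complex.sub_re, Complex.sub_im,
    Complex.mul_re, Complex.mul_im, Complex.neg_re, Complex.neg_im, Complex.conj_re,
    Complex.conj_im, Complex.ofReal_re, Complex.ofReal_im, Complex.one_re, Complex.one_im,
    Complex.div_re, Complex.div_im, Complex.re_ofNat, Complex.im_ofNat]
  ring


/-- For arbitrary `λ, μ : ℤ → ℂ`, the birth-and-death coefficient matrix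
satisfies the isometry form identity: for all finitely supported `u, v, w ∈ ℓ²(ℤ)`,
`2 Re(⟨u, F⁰₀u⟩ + ⟨u, F⁰₁v⟩ + ⟨u, F⁰₂w⟩ + ⟨v, F¹₀u⟩ + ⟨v, (W*-I)v⟩ + ⟨w, F²₀u⟩ + ⟨w, (W-I)w⟩)
  + ‖F¹₀u + (W*-I)v‖² + ‖F²₀u + (W-I)w‖² = 0`. -/
theorem birth_death_isometry_form_identity (lam mu : ℤ → ℂ)
    (u v w : ℤ → ℂ) (hu : (Function.support u).Finite)
    (hv : (Function.support v).Finite) (hw : (Function.support w).Finite) :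
    2 * ((l2ipZ u (bdF00 lam mu u) + l2ipZ u (bdF01 lam v) + l2ipZ u (bdF02 mu w)
          + l2ipZ v (bdF10 lam u) + l2ipZ v (fun n => bdWstar v n - v n)
          + l2ipZ w (bdF20 mu u) + l2ipZ w (fun n => bdW w n - w n)).re)
      + (∑' n, ‖bdF10 lam u n + (bdWstar v n - v n)‖ ^ 2)
      + (∑' n, ‖bdF20 mu u n + (bdW w n - w n)‖ ^ 2) = 0 := by

  classical
  set S0 : Finset ℤ := hu.toFinset ∪ hv.toFinset ∪ hw.toFinset with hS0
  set T : Finset ℤ := (S0 ∪ S0.image (· + 1)) ∪ S0.image (· - 1) with hT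
  have memS0 : ∀ n : ℤ, u n ≠ 0 ∨ v n ≠ 0 ∨ w n ≠ 0 → n ∈ S0 := by
    intro n h
    simp only [hS0, Finset.mem_union, Set.Finite.mem_toFinset, Function.mem_support]
    tauto
  have memT1 : ∀ n : ℤ, n ∈ S0 → n ∈ T := by
    intro n h; simp only [hT, Finset.mem_union]; tauto
  have memT2 : ∀ n : ℤ, n + 1 ∈ S0 → n ∈ T := by
    intro n h
    simp only [hT, Finset.mem_union, Finset.mem_image]
    exact Or.inr ⟨n + 1, h, by ring⟩
  have memT3 : ∀ n : ℤ, n - 1 ∈ S0 → n ∈ T := by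
    intro n h
    simp only [hT, Finset.mem_union, Finset.mem_image]
    exact Or.inl (Or.inr ⟨n - 1, h, by ring⟩)
  have hu0 : ∀ n ∉ T, u n = 0 := fun n hn => by
    by_contra h; exact hn (memT1 n (memS0 n (Or.inl h)))
  have hv0 : ∀ n ∉ T, v n = 0 := fun n hn => by
    by_contra h; exact hn (memT1 n (memS0 n (Or.inr (Or.inl h))))
  have hw0 : ∀ n ∉ T, w n = 0 := fun n hn => by
    by_contra h; exact hn (memT1 n (memS0 n (Or.inr (Or.inr h))))
  have hv1 : ∀ n ∉ T, v (n + 1) = 0 := fun n hn => by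
    by_contra h; exact hn (memT2 n (memS0 (n + 1) (Or.inr (Or.inl h))))
  have hw1 : ∀ n ∉ T, w (n - 1) = 0 := fun n hn => by
    by_contra h; exact hn (memT3 n (memS0 (n - 1) (Or.inr (Or.inr h))))
  have tv : ∑ n ∈ T, Complex.normSq (v (n + 1)) = ∑ n ∈ T, Complex.normSq (v n) := by
    calc ∑ n ∈ T, Complex.normSq (v (n + 1))
        = ∑ m ∈ T.image (fun n => n + 1), Complex.normSq (v m) :=
          (Finset.sum_image (g := fun n => n + 1) (f := fun m => Complex.normSq (v m))
            (fun x _ y _ h => by simpa using h)).symm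
      _ = ∑ m ∈ T ∪ T.image (fun n => n + 1), Complex.normSq (v m) := by
          refine Finset.sum_subset Finset.subset_union_right (fun m _ hm => ?_)
          have h1 : m - 1 ∉ T := fun h => hm (Finset.mem_image.2 ⟨m - 1, h, by ring⟩)
          have hm0 : v m = 0 := by
            by_contra h
            exact h1 (memT2 (m - 1) (by rw [sub_add_cancel]; exact memS0 m (Or.inr (Or.inl h))))
          simp [hm0]
      _ = ∑ m ∈ T, Complex.normSq (v m) :=
          (Finset.sum_subset Finset.subset_union_left (fun m _ hm => by simp [hv0 m hm])).symm
  have tw : ∑ n ∈ T, Complex.normSq (w (n - 1)) = ∑ n ∈ T, Complex.normSq (w n) := by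
    calc ∑ n ∈ T, Complex.normSq (w (n - 1))
        = ∑ m ∈ T.image (fun n => n - 1), Complex.normSq (w m) :=
          (Finset.sum_image (g := fun n => n - 1) (f := fun m => Complex.normSq (w m))
            (fun x _ y _ h => by simpa using h)).symm
      _ = ∑ m ∈ T ∪ T.image (fun n => n - 1), Complex.normSq (w m) := by
          refine Finset.sum_subset Finset.subset_union_right (fun m _ hm => ?_)
          have h1 : m + 1 ∉ T := fun h => hm (Finset.mem_image.2 ⟨m + 1, h, by ring⟩)
          have hm0 : w m = 0 := by
            by_contra h
            exact h1 (memT3 (m + 1)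
              (by rw [add_sub_cancel_right]; exact memS0 m (Or.inr (Or.inr h))))
          simp [hm0]
      _ = ∑ m ∈ T, Complex.normSq (w m) :=
          (Finset.sum_subset Finset.subset_union_left (fun m _ hm => by simp [hw0 m hm])).symm
  simp only [l2ipZ, bdF00, bdF01, bdF02, bdF10, bdF20, bdWstar, bdW]
  rw [tsum_eq_sum (s := T) (fun n hn => by simp [hu0 n hn]),
      tsum_eq_sum (s := T) (fun n hn => by simp [hu0 n hn]),
      tsum_eq_sum (s := T) (fun n hn => by simp [hu0 n hn]),
      tsum_eq_sum (s := T) (fun n hn => by simp [hv0 n hn]),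
      tsum_eq_sum (s := T) (fun n hn => by simp [hv0 n hn]),
      tsum_eq_sum (s := T) (fun n hn => by simp [hw0 n hn]),
      tsum_eq_sum (s := T) (fun n hn => by simp [hw0 n hn]),
      tsum_eq_sum (s := T) (fun n hn => by simp [hu0 n hn, hv0 n hn, hv1 n hn]),
      tsum_eq_sum (s := T) (fun n hn => by simp [hu0 n hn, hw0 n hn, hw1 n hn])]
  simp only [Complex.sq_norm]
  rw [← Finset.sum_add_distrib, ← Finset.sum_add_distrib, ← Finset.sum_add_distrib,
      ← Finset.sum_add_distrib, ← Finset.sum_add_distrib, ← Finset.sum_add_distrib,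
      Complex.re_sum, Finset.mul_sum, ← Finset.sum_add_distrib, ← Finset.sum_add_distrib,
      Finset.sum_congr rfl
        (fun n _ => key_pointwise (lam n) (mu n) (u n) (v n) (v (n + 1)) (w n) (w (n - 1))),
      Finset.sum_add_distrib, Finset.sum_sub_distrib, Finset.sum_sub_distrib, tv, tw]
  ring
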